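/- arXiv:1603.06422 — 2 statements merged into one kernel-verified Lean document; each statement's English description precedes it below -/
import Mathlib

section
/- An equivalence relation R is a governed stuttering bisimulation if and only if for all v R w: Ω(v) = Ω(w), and for every player i and every set of R-classes 𝒰 ⊆ V/R not containing [v]_R: v ⇒_{i,R} 𝒰 iff w ⇒_{i,R} 𝒰 (forcing play from v/w, via R-related vertices, into the union of the classes in 𝒰). In particular, the divergence condition becomes derivable. -/
universe u

/-- A parity game: a directed graph with a total edge relation, a priority
function and an owner function (`true` = player even, `false` = player odd). -/
structure ParityGame (V : Type u) where
  edge : V → V → Prop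
  total : ∀ v, ∃ w, edge v w
  prio : V → ℕ
  owner : V → Bool

namespace ParityGame

variable {V : Type u}

/-- A (history-dependent) strategy: given the history of previously visited
vertices and the current vertex, choose a successor.  Only the values at
vertices owned by the given player matter. -/
abbrev Strategy (V : Type u) : Type u := List V → V → V

variable (G : ParityGame V)

/-- A strategy is valid for player `i` if it always proposes edges. -/
def ValidStrategy (i : Bool) (σ : Strategy V) : Prop :=
  ∀ h v, G.owner v = i → G.edge v (σ h v)

/-- A memoryless strategy only depends on the current vertex. -/
def Memoryless (σ : Strategy V) : Prop := ∀ h h' v, σ h v = σ h' v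

/-- An (infinite) play is an infinite path in the game graph. -/
def IsPlay (p : ℕ → V) : Prop := ∀ n, G.edge (p n) (p (n + 1))

/-- The history of a play before position `n`. -/
def hist (p : ℕ → V) (n : ℕ) : List V := List.ofFn (fun k : Fin n => p k)

/-- A play is consistent with a strategy `σ` of player `i` if at every vertex
owned by `i` the play follows `σ`. -/
def Consistent (i : Bool) (σ : Strategy V) (p : ℕ → V) : Prop :=
  ∀ n, G.owner (p n) = i → p (n + 1) = σ (hist p n) (p n)

/-- `G.ForcesVia i σ v U T`: every play from `v` consistent with `σ` reaches
`T`, all earlier vertices lying in `U`. -/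
def ForcesVia (i : Bool) (σ : Strategy V) (v : V) (U T : Set V) : Prop :=
  ∀ p : ℕ → V, G.IsPlay p → G.Consistent i σ p → p 0 = v →
    ∃ n, p n ∈ T ∧ ∀ j < n, p j ∈ U

/-- `v ⇒_{i,U} T`: player `i` has a memoryless strategy forcing every
consistent play from `v` to reach `T` while staying in `U` beforehand. -/
def Forces (i : Bool) (v : V) (U T : Set V) : Prop :=
  ∃ σ : Strategy V, G.ValidStrategy i σ ∧ Memoryless σ ∧ G.ForcesVia i σ v U T

/-- Every play from `v` consistent with `σ` stays in `U` forever. -/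
def DivergesVia (i : Bool) (σ : Strategy V) (v : V) (U : Set V) : Prop :=
  ∀ p : ℕ → V, G.IsPlay p → G.Consistent i σ p → p 0 = v → ∀ n, p n ∈ U

/-- `v ⇒^ω_{i,U}`: player `i` has a memoryless strategy keeping all
consistent plays from `v` forever inside `U`. -/
def Diverges (i : Bool) (v : V) (U : Set V) : Prop :=
  ∃ σ : Strategy V, G.ValidStrategy i σ ∧ Memoryless σ ∧ G.DivergesVia i σ v U

/-- Priority `k` occurs infinitely often on the play `p`. -/
def InfOften (p : ℕ → V) (k : ℕ) : Prop := ∀ N, ∃ n, N ≤ n ∧ G.prio (p n) = k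

/-- Player even wins a play iff the least priority occurring infinitely often
is even. -/
def EvenWinsPlay (p : ℕ → V) : Prop := Even (sInf {k | G.InfOften p k})

/-- Player `i` wins the play `p`. -/
def WinsPlay (i : Bool) (p : ℕ → V) : Prop := G.EvenWinsPlay p ↔ i = true

/-- `σ` is a winning strategy for player `i` from `v`. -/
def WinningFrom (i : Bool) (σ : Strategy V) (v : V) : Prop :=
  ∀ p : ℕ → V, G.IsPlay p → G.Consistent i σ p → p 0 = v → G.WinsPlay i p

end ParityGame

namespace ParityGame

/-- The `R`-class of `v`. -/
def cls {V : Type u} (R : V → V → Prop) (v : V) : Set V := {x | R v x}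

variable {V : Type u} (G : ParityGame V)

/-- Governed stuttering bisimulations. -/
def IsGSB (R : V → V → Prop) : Prop :=
  Equivalence R ∧ ∀ v w, R v w →
    G.prio v = G.prio w ∧
    (∀ u, ¬ R v u → (∃ v', G.edge v v' ∧ R u v') →
      G.Forces (G.owner v) w (cls R w) (cls R u)) ∧
    (∀ i : Bool, G.Diverges i v (cls R v) → G.Diverges i w (cls R w))

end ParityGame
namespace ParityGame

variable {V : Type u}

attribute [local instance] Classical.propDecidable

noncomputable def pick (G : ParityGame V) (x : V) : V := (G.total x).choose

lemma edge_pick (G : ParityGame V) (x : V) : G.edge x (G.pick x) := (G.total x).choose_spec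

lemma isPlay_shift {G : ParityGame V} {p : ℕ → V} (h : G.IsPlay p) :
    G.IsPlay fun k => p (k + 1) := fun n => h (n + 1)

lemma consistent_shift {G : ParityGame V} {i : Bool} {σ : Strategy V} {p : ℕ → V}
    (hm : Memoryless σ) (h : G.Consistent i σ p) :
    G.Consistent i σ fun k => p (k + 1) := fun n hn => (h (n + 1) hn).trans (hm _ _ _)

lemma bool_eq_not_of_ne {a b : Bool} (h : a ≠ b) : a = !b := by
  cases a <;> cases b <;> simp_all

def walk (F : V → V) (x : V) : ℕ → V := fun n => F^[n] x

@[simp] lemma walk_zero (F : V → V) (x : V) : walk F x 0 = x := rfl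

lemma walk_succ (F : V → V) (x : V) (n : ℕ) : walk F x (n + 1) = F (walk F x n) :=
  Function.iterate_succ_apply' F n x

def stepFun (G : ParityGame V) (i : Bool) (a b : V → V) : V → V :=
  fun c => if G.owner c = i then a c else b c

lemma walk_isPlay {G : ParityGame V} {i : Bool} {a b : V → V}
    (ha : ∀ c, G.owner c = i → G.edge c (a c))
    (hb : ∀ c, G.owner c ≠ i → G.edge c (b c)) (x : V) :
    G.IsPlay (walk (G.stepFun i a b) x) := by
  intro n
  rw [walk_succ]
  by_cases h : G.owner (walk (G.stepFun i a b) x n) = i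
  · rw [stepFun, if_pos h]; exact ha _ h
  · rw [stepFun, if_neg h]; exact hb _ h

lemma walk_consistent {G : ParityGame V} {i : Bool} {σ : Strategy V} {b : V → V}
    (hm : Memoryless σ) (x : V) :
    G.Consistent i σ (walk (G.stepFun i (σ []) b) x) := by
  intro n hn
  rw [walk_succ, stepFun, if_pos hn]
  exact hm _ _ _

lemma walk_consistent_other {G : ParityGame V} {i : Bool} {τ : Strategy V} {a : V → V}
    (hm : Memoryless τ) (x : V) :
    G.Consistent (!i) τ (walk (G.stepFun i a (τ [])) x) := by
  intro n hn
  have h : G.owner (walk (G.stepFun i a (τ [])) x n) ≠ i := by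
    rw [hn]; cases i <;> simp
  rw [walk_succ, stepFun, if_neg h]
  exact hm _ _ _

section Attr

variable (G : ParityGame V) (i : Bool) (U T : Set V)

/-- One step of the attractor computation. -/
def gstep (A : Set V) : Set V :=
  T ∪ {x | x ∈ U ∧ ((G.owner x = i ∧ ∃ y, G.edge x y ∧ y ∈ A) ∨
      (G.owner x ≠ i ∧ ∀ y, G.edge x y → y ∈ A))}

variable {G i U T}

lemma gstep_mono {A B : Set V} (h : A ⊆ B) : G.gstep i U T A ⊆ G.gstep i U T B := by
  rintro x (hx | ⟨hxU, ⟨ho, y, hy, hyA⟩ | ⟨ho, hall⟩⟩)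
  · exact Or.inl hx
  · exact Or.inr ⟨hxU, Or.inl ⟨ho, y, hy, h hyA⟩⟩
  · exact Or.inr ⟨hxU, Or.inr ⟨ho, fun y hy => h (hall y hy)⟩⟩

variable (G i U T)

def attrN (n : ℕ) : Set V := (G.gstep i U T)^[n] ∅

@[simp] lemma attrN_zero : G.attrN i U T 0 = ∅ := rfl

lemma attrN_succ (n : ℕ) : G.attrN i U T (n + 1) = G.gstep i U T (G.attrN i U T n) :=
  Function.iterate_succ_apply' _ n ∅

lemma attrN_mono_succ (n : ℕ) : G.attrN i U T n ⊆ G.attrN i U T (n + 1) := by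
  induction n with
  | zero => simp
  | succ n ih => rw [attrN_succ, attrN_succ]; exact gstep_mono ih

lemma attrN_mono {n m : ℕ} (h : n ≤ m) : G.attrN i U T n ⊆ G.attrN i U T m := by
  induction h with
  | refl => exact subset_rfl
  | step _ ih => exact ih.trans (attrN_mono_succ _ _ _ _ _)

lemma attrN_le_TU (n : ℕ) : G.attrN i U T n ⊆ T ∪ U := by
  cases n with
  | zero => simp
  | succ n =>
    rw [attrN_succ]
    rintro x (hx | ⟨hxU, -⟩)
    · exact Or.inl hx
    · exact Or.inr hxU

variable [Fintype V]

lemma exists_stab : ∃ n, G.attrN i U T (n + 1) = G.attrN i U T n := by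
  by_contra h
  push_neg at h
  have hmono : ∀ n, G.attrN i U T n ⊂ G.attrN i U T (n + 1) := fun n =>
    (attrN_mono_succ G i U T n).ssubset_of_ne (h n).symm
  have hcard : ∀ n, n ≤ (G.attrN i U T n).ncard := by
    intro n
    induction n with
    | zero => exact Nat.zero_le _
    | succ n ih =>
      have := Set.ncard_lt_ncard (hmono n) (Set.toFinite _)
      omega
  have h2 := hcard (Fintype.card V + 1)
  have h3 : (G.attrN i U T (Fintype.card V + 1)).ncard ≤ Fintype.card V := by
    have := Set.ncard_le_ncard (Set.subset_univ (G.attrN i U T (Fintype.card V + 1)))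
      (Set.toFinite (Set.univ : Set V))
    simpa [Set.ncard_univ] using this
  omega

noncomputable def attr : Set V := G.attrN i U T (Nat.find (exists_stab G i U T))

lemma attr_fix : G.gstep i U T (G.attr i U T) = G.attr i U T := by
  rw [attr, ← attrN_succ]
  exact Nat.find_spec (exists_stab G i U T)

lemma attrN_le_attr (n : ℕ) : G.attrN i U T n ⊆ G.attr i U T := by
  set N := Nat.find (exists_stab G i U T) with hN
  by_cases h : n ≤ N
  · exact attrN_mono G i U T h
  · have hk : ∀ k, G.attrN i U T (N + k) = G.attr i U T := by
      intro k
      induction k with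
      | zero => rfl
      | succ k ih => rw [← Nat.add_assoc, attrN_succ, ih, attr_fix]
    have : n = N + (n - N) := by omega
    rw [this, hk]

lemma T_le_attr : T ⊆ G.attr i U T := by
  rw [← attr_fix]; exact Set.subset_union_left

lemma attr_le_TU : G.attr i U T ⊆ T ∪ U := attrN_le_TU G i U T _

noncomputable def rk (x : V) : ℕ := sInf {n | x ∈ G.attrN i U T n}

noncomputable def fstrat : Strategy V := fun _ x =>
  if h : ∃ y, G.edge x y ∧ y ∈ G.attrN i U T (G.rk i U T x - 1) then h.choose else G.pick x

lemma fstrat_valid (k : Bool) : G.ValidStrategy k (G.fstrat i U T) := by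
  intro h v _
  rw [fstrat]
  split
  · next hh => exact hh.choose_spec.1
  · exact G.edge_pick v

lemma fstrat_memoryless : Memoryless (G.fstrat i U T) := fun _ _ _ => rfl

lemma attrN_forcesVia : ∀ n, ∀ x ∈ G.attrN i U T n,
    ∀ p, G.IsPlay p → G.Consistent i (G.fstrat i U T) p → p 0 = x →
      ∃ m, p m ∈ T ∧ ∀ j < m, p j ∈ U := by
  intro n
  induction n with
  | zero => simp
  | succ n IH =>
    intro x hx p hp hc h0
    have hx' := hx
    rw [attrN_succ] at hx
    by_cases hT : x ∈ T
    · exact ⟨0, by rw [h0]; exact hT, by omega⟩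
    rcases hx with hx | ⟨hxU, hdisj⟩
    · exact absurd hx hT
    have key : p 1 ∈ G.attrN i U T n := by
      rcases hdisj with ⟨hown, -⟩ | ⟨hown, hall⟩
      · -- owner = i : follow the strategy
        have hrk1 : x ∈ G.attrN i U T (G.rk i U T x) :=
          Nat.sInf_mem (⟨n + 1, hx'⟩ : {m | x ∈ G.attrN i U T m}.Nonempty)
        have hrkle : G.rk i U T x ≤ n + 1 := Nat.sInf_le hx'
        have hrkpos : G.rk i U T x ≠ 0 := by
          intro h; rw [h] at hrk1; simp at hrk1
        have hrkeq : G.rk i U T x = (G.rk i U T x - 1) + 1 := by omega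
        rw [hrkeq, attrN_succ] at hrk1
        rcases hrk1 with hrk1 | ⟨-, hd⟩
        · exact absurd hrk1 hT
        have hex : ∃ y, G.edge x y ∧ y ∈ G.attrN i U T (G.rk i U T x - 1) := by
          rcases hd with ⟨-, hex⟩ | ⟨hno, -⟩
          · exact hex
          · exact absurd hown hno
        have hp1 : p 1 = G.fstrat i U T (hist p 0) (p 0) := hc 0 (by rw [h0]; exact hown)
        rw [hp1, h0, fstrat, dif_pos hex]
        exact attrN_mono G i U T (by omega) hex.choose_spec.2
      · -- owner ≠ i : every successor works
        have := hp 0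
        rw [h0] at this
        exact hall _ this
    obtain ⟨m, hm1, hm2⟩ := IH (p 1) key (fun k => p (k + 1)) (isPlay_shift hp)
      (consistent_shift (fstrat_memoryless G i U T) hc) rfl
    refine ⟨m + 1, hm1, ?_⟩
    intro j hj
    cases j with
    | zero => rw [h0]; exact hxU
    | succ j => exact hm2 j (by omega)

theorem attr_forces {x : V} (hx : x ∈ G.attr i U T) : G.Forces i x U T :=
  ⟨G.fstrat i U T, fstrat_valid G i U T i, fstrat_memoryless G i U T,
    fun p hp hc h0 => attrN_forcesVia G i U T _ x hx p hp hc h0⟩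

/-- The escape function: prefer a successor outside the attractor. -/
noncomputable def esc : V → V := fun c =>
  if h : ∃ y, G.edge c y ∧ y ∉ G.attr i U T then h.choose else G.pick c

lemma esc_edge (c : V) : G.edge c (G.esc i U T c) := by
  rw [esc]
  split
  · next h => exact h.choose_spec.1
  · exact G.edge_pick c

lemma esc_not_attr {c : V} (h : ∃ y, G.edge c y ∧ y ∉ G.attr i U T) :
    G.esc i U T c ∉ G.attr i U T := by
  rw [esc, dif_pos h]
  exact h.choose_spec.2

/-- If `c ∈ U` is outside the attractor, then the appropriate successor
conditions hold (this is the key consequence of the fixpoint property). -/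
lemma not_attr_step {c : V} (hU : c ∈ U) (hA : c ∉ G.attr i U T) :
    c ∉ T ∧ (G.owner c = i → ∀ y, G.edge c y → y ∉ G.attr i U T) ∧
      (G.owner c ≠ i → ∃ y, G.edge c y ∧ y ∉ G.attr i U T) := by
  have hng : c ∉ G.gstep i U T (G.attr i U T) := by rw [attr_fix]; exact hA
  have hnT : c ∉ T := fun h => hng (Or.inl h)
  have hnd : ¬ ((G.owner c = i ∧ ∃ y, G.edge c y ∧ y ∈ G.attr i U T) ∨
      (G.owner c ≠ i ∧ ∀ y, G.edge c y → y ∈ G.attr i U T)) :=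
    fun hd => hng (Or.inr ⟨hU, hd⟩)
  push_neg at hnd
  exact ⟨hnT, hnd.1, fun h => by
    obtain ⟨y, hy1, hy2⟩ := (hnd.2 h)
    exact ⟨y, hy1, hy2⟩⟩

theorem forces_attr {x : V} (h : G.Forces i x U T) : x ∈ G.attr i U T := by
  by_contra hx
  obtain ⟨σ, hv, hm, hf⟩ := h
  set q := walk (G.stepFun i (σ []) (G.esc i U T)) x with hq
  have hplay : G.IsPlay q :=
    walk_isPlay (fun c hc => hv [] c hc) (fun c _ => esc_edge G i U T c) x
  have hcons : G.Consistent i σ q := walk_consistent hm x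
  have hinv : ∀ n, (∀ j < n, q j ∈ U) → q n ∉ G.attr i U T := by
    intro n
    induction n with
    | zero => intro _; exact hx
    | succ n IH =>
      intro hU
      have hn := IH (fun j hj => hU j (by omega))
      have hnU : q n ∈ U := hU n (by omega)
      obtain ⟨-, h1, h2⟩ := not_attr_step G i U T hnU hn
      have hqs : q (n + 1) = G.stepFun i (σ []) (G.esc i U T) (q n) := walk_succ _ _ n
      rw [hqs]
      by_cases how : G.owner (q n) = i
      · rw [stepFun, if_pos how]
        exact h1 how _ (hv [] (q n) how)
      · rw [stepFun, if_neg how]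
        exact esc_not_attr G i U T (h2 how)
  obtain ⟨m, hmT, hmU⟩ := hf q hplay hcons rfl
  exact hinv m hmU (T_le_attr G i U T hmT)

/-- If every `U`-vertex outside the attractor has all its successors in
`U ∪ T`, then from outside the attractor the opponent can stay in `U` forever. -/
lemma escape_diverges (hsucc : ∀ c, c ∈ U → c ∉ G.attr i U T → ∀ y, G.edge c y → y ∈ U ∪ T)
    {x : V} (hxU : x ∈ U) (hx : x ∉ G.attr i U T) : G.Diverges (!i) x U := by
  refine ⟨fun _ c => G.esc i U T c, fun h v _ => esc_edge G i U T v,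
    fun _ _ _ => rfl, ?_⟩
  intro p hp hc h0
  have key : ∀ n, p n ∈ U ∧ p n ∉ G.attr i U T := by
    intro n
    induction n with
    | zero => rw [h0]; exact ⟨hxU, hx⟩
    | succ n IH =>
      obtain ⟨hU, hA⟩ := IH
      obtain ⟨-, h1, h2⟩ := not_attr_step G i U T hU hA
      have hstep : p (n + 1) ∉ G.attr i U T := by
        by_cases how : G.owner (p n) = !i
        · rw [hc n how]
          refine esc_not_attr G i U T (h2 ?_)
          rw [how]; cases i <;> simp
        · have how' : G.owner (p n) = i := by
            have := bool_eq_not_of_ne how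
            rwa [Bool.not_not] at this
          exact h1 how' _ (hp n)
      refine ⟨?_, hstep⟩
      rcases hsucc (p n) hU hA _ (hp n) with h | h
      · exact h
      · exact absurd (T_le_attr G i U T h) hstep
  exact fun n => (key n).1

lemma diverges_not_forces (hTU : ∀ y, y ∈ T → y ∉ U) {x : V}
    (hd : G.Diverges i x U) : ¬ G.Forces (!i) x U T := by
  rintro ⟨τ, hτv, hτm, hτf⟩
  obtain ⟨σ, hσv, hσm, hσd⟩ := hd
  set q := walk (G.stepFun i (σ []) (τ [])) x with hq
  have hplay : G.IsPlay q :=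
    walk_isPlay (fun c hc => hσv [] c hc)
      (fun c hc => hτv [] c (bool_eq_not_of_ne hc)) x
  have hc1 : G.Consistent i σ q := walk_consistent hσm x
  have hc2 : G.Consistent (!i) τ q := walk_consistent_other hτm x
  obtain ⟨m, hmT, -⟩ := hτf q hplay hc2 rfl
  exact hTU _ hmT (hσd q hplay hc1 rfl m)

end Attr

section OneStep

variable {G : ParityGame V}

lemma not_diverges_of_succ {x : V} {U : Set V}
    (hS : ∀ y, G.edge x y → y ∉ U) (k : Bool) : ¬ G.Diverges k x U := by
  rintro ⟨σ, hv, hm, hd⟩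
  set q := walk (G.stepFun k (σ []) G.pick) x with hq
  have hplay : G.IsPlay q :=
    walk_isPlay (fun c hc => hv [] c hc) (fun c _ => G.edge_pick c) x
  have hcons : G.Consistent k σ q := walk_consistent hm x
  have hedge : G.edge x (q 1) := by
    have := hplay 0
    exact this
  exact hS _ hedge (hd q hplay hcons rfl 1)

lemma not_forces_of_succ {x : V} {U E S : Set V}
    (hS : ∀ y, G.edge x y → y ∈ S) (hSU : ∀ y ∈ S, y ∉ U)
    (hSE : ∀ y ∈ S, y ∉ E) (hxE : x ∉ E) (k : Bool) : ¬ G.Forces k x U E := by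
  rintro ⟨σ, hv, hm, hf⟩
  set q := walk (G.stepFun k (σ []) G.pick) x with hq
  have hplay : G.IsPlay q :=
    walk_isPlay (fun c hc => hv [] c hc) (fun c _ => G.edge_pick c) x
  have hcons : G.Consistent k σ q := walk_consistent hm x
  have hq1 : q 1 ∈ S := by
    have := hplay 0
    exact hS _ (by exact this)
  obtain ⟨m, hmE, hmU⟩ := hf q hplay hcons rfl
  match m with
  | 0 => exact hxE hmE
  | 1 => exact hSE _ hq1 hmE
  | (m + 2) => exact hSU _ hq1 (hmU 1 (by omega))

lemma forces_mono {i : Bool} {x : V} {U T₁ T₂ : Set V} (h : T₁ ⊆ T₂)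
    (hf : G.Forces i x U T₁) : G.Forces i x U T₂ := by
  obtain ⟨σ, h1, h2, h3⟩ := hf
  exact ⟨σ, h1, h2, fun p hp hc h0 =>
    (h3 p hp hc h0).imp fun n ⟨ha, hb⟩ => ⟨h ha, hb⟩⟩

end OneStep

section Cls

variable {R : V → V → Prop}

lemma cls_eq (hEq : Equivalence R) {a b : V} (h : R a b) : cls R a = cls R b :=
  Set.ext fun x => ⟨fun hx => hEq.trans (hEq.symm h) hx, fun hx => hEq.trans h hx⟩

lemma mem_cls_self (hEq : Equivalence R) (a : V) : a ∈ cls R a := hEq.refl a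

end Cls

end ParityGame
namespace ParityGame

section Main

variable {V : Type u} [Fintype V] {G : ParityGame V} {R : V → V → Prop}

attribute [local instance] Classical.propDecidable

/-- Key lemma: under a GSB, if one vertex of a class lies in the attractor to a
union of other classes (within the class), then the whole class does. -/
theorem gsb_attr_all (hR : G.IsGSB R) (v₀ : V) (i : Bool)
    (𝒰 : Set (Set V)) (h𝒰 : ∀ D ∈ 𝒰, ∃ u, D = cls R u) (hC𝒰 : cls R v₀ ∉ 𝒰) :
    ∀ n, ∀ x ∈ cls R v₀, x ∈ G.attrN i (cls R v₀) (⋃₀ 𝒰) n →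
      ∀ z ∈ cls R v₀, z ∈ G.attr i (cls R v₀) (⋃₀ 𝒰) := by
  obtain ⟨hEq, hcond⟩ := hR
  have hrel : ∀ a ∈ cls R v₀, ∀ b ∈ cls R v₀, R a b :=
    fun a ha b hb => hEq.trans (hEq.symm ha) hb
  have hclsmem : ∀ a ∈ cls R v₀, cls R a = cls R v₀ :=
    fun a ha => (cls_eq hEq ha).symm
  have hmemC : ∀ {a y : V}, a ∈ cls R v₀ → R a y → y ∈ cls R v₀ :=
    fun ha hr => hEq.trans ha hr
  have hCT : ∀ y ∈ cls R v₀, y ∉ ⋃₀ 𝒰 := by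
    rintro y hy ⟨D, hD, hyD⟩
    obtain ⟨u, rfl⟩ := h𝒰 D hD
    have : cls R u = cls R v₀ := (cls_eq hEq hyD).trans (hclsmem y hy)
    rw [this] at hD
    exact hC𝒰 hD
  have hTcls : ∀ y ∈ ⋃₀ 𝒰, cls R y ∈ 𝒰 ∧ cls R y ⊆ ⋃₀ 𝒰 := by
    rintro y ⟨D, hD, hyD⟩
    obtain ⟨u, rfl⟩ := h𝒰 D hD
    have he : cls R y = cls R u := (cls_eq hEq hyD).symm
    rw [he]
    exact ⟨hD, Set.subset_sUnion_of_mem hD⟩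
  intro n
  induction n with
  | zero => intro x _ hx; simp at hx
  | succ n IH =>
    intro x hxC hxA z hzC
    rw [attrN_succ] at hxA
    rcases hxA with hxT | ⟨hxU, hdisj⟩
    · exact absurd hxT (hCT x hxC)
    rcases hdisj with ⟨hown, y, hxy, hyA⟩ | ⟨hown, hall⟩
    · -- x owned by i, with a successor y in the previous attractor stage
      by_cases hyC : y ∈ cls R v₀
      · exact IH y hyC hyA z hzC
      · have hyT : y ∈ ⋃₀ 𝒰 := by
          rcases attrN_le_TU G i (cls R v₀) (⋃₀ 𝒰) n hyA with h | h
          · exact h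
          · exact absurd h hyC
        have hnR : ¬ R x y := fun hr => hyC (hmemC hxC hr)
        have hforce := (hcond x z (hrel x hxC z hzC)).2.1 y hnR ⟨y, hxy, hEq.refl y⟩
        rw [hclsmem z hzC, hown] at hforce
        exact forces_attr G i _ _ (forces_mono (hTcls y hyT).2 hforce)
    · -- x owned by the opponent, with all successors in the previous stage
      by_cases hex : ∃ y, G.edge x y ∧ y ∈ cls R v₀
      · obtain ⟨y, hxy, hyC⟩ := hex
        exact IH y hyC (hall y hxy) z hzC
      · push_neg at hex
        have hsuccT : ∀ y, G.edge x y → y ∈ ⋃₀ 𝒰 := by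
          intro y hy
          rcases attrN_le_TU G i (cls R v₀) (⋃₀ 𝒰) n (hall y hy) with h | h
          · exact h
          · exact absurd h (hex y hy)
        -- Step 1: no vertex of the class has an edge leaving `C ∪ T`.
        have hstep1 : ∀ c ∈ cls R v₀, ∀ y, G.edge c y → y ∈ cls R v₀ ∪ ⋃₀ 𝒰 := by
          intro c hcC y hcy
          by_contra hy
          rw [Set.mem_union] at hy
          push_neg at hy
          have hRcy : ¬ R c y := fun hr => hy.1 (hmemC hcC hr)
          have hforce := (hcond c x (hrel c hcC x hxC)).2.1 y hRcy ⟨y, hcy, hEq.refl y⟩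
          rw [hclsmem x hxC] at hforce
          refine not_forces_of_succ hsuccT (fun s hs hsC => hCT s hsC hs) ?_ ?_
            (G.owner c) hforce
          · intro s hsT hsE
            have h2 : cls R s ⊆ ⋃₀ 𝒰 := (hTcls s hsT).2
            exact hy.2 (h2 (hEq.symm hsE))
          · intro hxE
            exact hy.1 (hmemC hxC (hEq.symm hxE))
        -- Step 2: if z were outside the attractor, the opponent could diverge.
        by_contra hz
        have hdiv : G.Diverges (!i) z (cls R v₀) :=
          escape_diverges G i (cls R v₀) (⋃₀ 𝒰)
            (fun c hcC _ y hcy => hstep1 c hcC y hcy) hzC hz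
        -- Step 3: transfer divergence from z to x via the GSB condition.
        have hdiv' := (hcond z x (hrel z hzC x hxC)).2.2 (!i)
          (by rwa [hclsmem z hzC])
        rw [hclsmem x hxC] at hdiv'
        -- Step 4: but x cannot diverge, as all its successors leave the class.
        exact not_diverges_of_succ
          (fun y hy hyC => hCT y hyC (hsuccT y hy)) (!i) hdiv'

theorem gsb_forces_transfer (hR : G.IsGSB R) {v w : V} (hvw : R v w) (i : Bool)
    (𝒰 : Set (Set V)) (h𝒰 : ∀ D ∈ 𝒰, ∃ u, D = cls R u) (hv𝒰 : cls R v ∉ 𝒰)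
    (hf : G.Forces i v (cls R v) (⋃₀ 𝒰)) : G.Forces i w (cls R w) (⋃₀ 𝒰) := by
  have hEq := hR.1
  have hcw : cls R w = cls R v := (cls_eq hEq hvw).symm
  rw [hcw]
  have hvA : v ∈ G.attrN i (cls R v) (⋃₀ 𝒰)
      (Nat.find (exists_stab G i (cls R v) (⋃₀ 𝒰))) := forces_attr G i _ _ hf
  exact attr_forces G i _ _
    (gsb_attr_all hR v i 𝒰 h𝒰 hv𝒰 _ v (hEq.refl v) hvA w hvw)

lemma forces_of_edge (hEq : Equivalence R) {v v' u : V}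
    (h : G.edge v v') (hr : R u v') :
    G.Forces (G.owner v) v (cls R v) (cls R u) := by
  refine ⟨fun _ x => if x = v then v' else G.pick x, ?_, fun _ _ _ => rfl, ?_⟩
  · intro h' x _
    show G.edge x (if x = v then v' else G.pick x)
    by_cases hx : x = v
    · rw [if_pos hx, hx]; exact h
    · rw [if_neg hx]; exact G.edge_pick x
  · intro p hp hc h0
    refine ⟨1, ?_, ?_⟩
    · have h1 := hc 0 (by rw [h0])
      rw [h1, h0]
      show (if v = v then v' else G.pick v) ∈ cls R u
      rw [if_pos rfl]
      exact hr
    · intro j hj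
      have : j = 0 := by omega
      rw [this, h0]
      exact hEq.refl v

lemma sUnion_other_classes (hEq : Equivalence R) (v : V) :
    ⋃₀ {D | (∃ u, D = cls R u) ∧ D ≠ cls R v} = (cls R v)ᶜ := by
  ext y
  constructor
  · rintro ⟨D, ⟨⟨u, rfl⟩, hne⟩, hyD⟩
    intro hyC
    exact hne (((cls_eq hEq hyD).trans (cls_eq hEq hyC).symm))
  · intro hy
    exact ⟨cls R y, ⟨⟨y, rfl⟩, fun he => hy (he ▸ hEq.refl y)⟩, hEq.refl y⟩

end Main

end ParityGame

theorem isGSB_iff_classSets_form' {V : Type u} [Fintype V] (G : ParityGame V)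
    (R : V → V → Prop) :
    G.IsGSB R ↔
      (Equivalence R ∧ ∀ v w, R v w →
        G.prio v = G.prio w ∧
        ∀ (i : Bool) (𝒰 : Set (Set V)),
          (∀ C ∈ 𝒰, ∃ u, C = ParityGame.cls R u) →
          ParityGame.cls R v ∉ 𝒰 →
          (G.Forces i v (ParityGame.cls R v) (⋃₀ 𝒰) ↔
            G.Forces i w (ParityGame.cls R w) (⋃₀ 𝒰))) := by
  classical
  constructor
  · intro hR
    refine ⟨hR.1, fun v w hvw => ⟨(hR.2 v w hvw).1, fun i 𝒰 h𝒰 hv𝒰 => ?_⟩⟩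
    constructor
    · exact ParityGame.gsb_forces_transfer hR hvw i 𝒰 h𝒰 hv𝒰
    · intro hfw
      have hwv := hR.1.symm hvw
      have hcw : ParityGame.cls R w = ParityGame.cls R v :=
        (ParityGame.cls_eq hR.1 hvw).symm
      exact ParityGame.gsb_forces_transfer hR hwv i 𝒰 h𝒰 (hcw ▸ hv𝒰) hfw
  · rintro ⟨hEq, hchar⟩
    refine ⟨hEq, fun v w hvw => ?_⟩
    obtain ⟨hprio, hiff⟩ := hchar v w hvw
    have hcw : ParityGame.cls R w = ParityGame.cls R v :=
      (ParityGame.cls_eq hEq hvw).symm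
    refine ⟨hprio, ?_, ?_⟩
    · rintro u hvu ⟨v', hvv', huv'⟩
      have h1 : G.Forces (G.owner v) v (ParityGame.cls R v)
          (⋃₀ {ParityGame.cls R u}) := by
        rw [Set.sUnion_singleton]
        exact ParityGame.forces_of_edge hEq hvv' huv'
      have hnm : ParityGame.cls R v ∉ ({ParityGame.cls R u} : Set (Set V)) := by
        intro hmem
        rw [Set.mem_singleton_iff] at hmem
        have h3 : v ∈ ParityGame.cls R u := by rw [← hmem]; exact hEq.refl v
        exact hvu (hEq.symm h3)
      have h2 := (hiff (G.owner v) {ParityGame.cls R u}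
        (by rintro D hD; exact ⟨u, by simpa using hD⟩) hnm).mp h1
      rwa [Set.sUnion_singleton] at h2
    · intro i hdiv
      have hUn := ParityGame.sUnion_other_classes (R := R) hEq v
      have hnf : ¬ G.Forces (!i) v (ParityGame.cls R v) ((ParityGame.cls R v)ᶜ) :=
        ParityGame.diverges_not_forces G i (ParityGame.cls R v)
          ((ParityGame.cls R v)ᶜ) (fun y hy => hy) hdiv
      have hiff2 := hiff (!i) {D | (∃ u, D = ParityGame.cls R u) ∧ D ≠ ParityGame.cls R v}
        (fun D hD => hD.1) (fun h => h.2 rfl)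
      rw [hUn, hcw] at hiff2
      have hnfw : ¬ G.Forces (!i) w (ParityGame.cls R v) ((ParityGame.cls R v)ᶜ) :=
        fun h => hnf (hiff2.mpr h)
      have hwA : w ∉ G.attr (!i) (ParityGame.cls R v) ((ParityGame.cls R v)ᶜ) :=
        fun h => hnfw (ParityGame.attr_forces G (!i) _ _ h)
      have hdd := ParityGame.escape_diverges G (!i) (ParityGame.cls R v)
        ((ParityGame.cls R v)ᶜ)
        (fun c _ _ y _ => (em (y ∈ ParityGame.cls R v)).elim Or.inl Or.inr) hvw hwA
      rw [Bool.not_not] at hdd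
      rwa [hcw]

/-- Characterisation of governed stuttering bisimulation in terms of forcing
into unions of sets of classes; the divergence condition becomes derivable. -/
theorem isGSB_iff_classSets_form {V : Type u} [Fintype V] (G : ParityGame V)
    (R : V → V → Prop) :
    G.IsGSB R ↔
      (Equivalence R ∧ ∀ v w, R v w →
        G.prio v = G.prio w ∧
        ∀ (i : Bool) (𝒰 : Set (Set V)),
          (∀ C ∈ 𝒰, ∃ u, C = ParityGame.cls R u) →
          ParityGame.cls R v ∉ 𝒰 →
          (G.Forces i v (ParityGame.cls R v) (⋃₀ 𝒰) ↔
            G.Forces i w (ParityGame.cls R w) (⋃₀ 𝒰))) :=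
  isGSB_iff_classSets_form' G R
end

section
/- In the odd-vertex case of the direct simulation quotient: if an equivalence class C of direct simulation equivalence satisfies C ⊆ V_odd, then for all v, w ∈ C the sets of equivalence classes of ≤_d-minimal successors coincide: [min_{≤_d}(post(v))]_{≡_d} = [min_{≤_d}(post(w))]_{≡_d}. Dually, if C ⊆ V_even, the classes of ≤_d-maximal successors of any two members of C coincide. If C contains vertices of both players, then for v ∈ C ∩ V_even and w ∈ C ∩ V_odd, [max_{≤_d}(post(v))]_{≡_d} = [min_{≤_d}(post(w))]_{≡_d} and this set is a singleton. -/
universe u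

namespace ParityGame

variable {V : Type u} (G : ParityGame V)

/-- `w →_even S`: player even can ensure that the move from `w` ends in `S`:
if `w` is even-owned some successor of `w` is in `S`; if `w` is odd-owned all
successors of `w` are in `S`. -/
def stepEven (w : V) (S : Set V) : Prop :=
  if G.owner w = true then ∃ w', G.edge w w' ∧ w' ∈ S
  else ∀ w', G.edge w w' → w' ∈ S

/-- Coinductive direct simulation relations. -/
def IsDirectSim (R : V → V → Prop) : Prop :=
  ∀ v w, R v w →
    G.prio v = G.prio w ∧
    (G.owner v = true → ∀ v', G.edge v v' → G.stepEven w {w' | R v' w'}) ∧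
    (G.owner v = false → G.stepEven w {w' | ∃ v', G.edge v v' ∧ R v' w'})

/-- The direct simulation preorder `v ≤_d w`. -/
def dsim (v w : V) : Prop := ∃ R, G.IsDirectSim R ∧ R v w

end ParityGame

namespace ParityGame

variable {V : Type u} (G : ParityGame V)

/-- Direct simulation equivalence `v ≡_d w`. -/
def deq (v w : V) : Prop := G.dsim v w ∧ G.dsim w v

/-- The `≤_d`-minimal successors of `v`. -/
def minSucc (v : V) : Set V :=
  {v' | G.edge v v' ∧ ∀ u, G.edge v u → G.dsim u v' → G.dsim v' u}

/-- The `≤_d`-maximal successors of `v`. -/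
def maxSucc (v : V) : Set V :=
  {v' | G.edge v v' ∧ ∀ u, G.edge v u → G.dsim v' u → G.dsim u v'}

/-- The set of `≡_d`-equivalence classes of the elements of `S`. -/
def clsSet (S : Set V) : Set (Set V) := {C | ∃ s ∈ S, C = {x | G.deq s x}}

end ParityGame

namespace ParityGame

variable {V : Type u} (G : ParityGame V)

lemma stepEven_mono {w : V} {S T : Set V} (hST : S ⊆ T) (h : G.stepEven w S) :
    G.stepEven w T := by
  unfold stepEven at *
  split at h <;> simp_all
  · obtain ⟨w', h1, h2⟩ := h; exact ⟨w', h1, hST h2⟩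
  · intro w' hw'; exact hST (h w' hw')

lemma dsim_refl (v : V) : G.dsim v v := by
  refine ⟨Eq, ?_, rfl⟩
  intro a b hab; subst hab
  refine ⟨rfl, ?_, ?_⟩
  · intro ho v' hv'
    unfold stepEven
    rw [if_pos ho]
    exact ⟨v', hv', rfl⟩
  · intro ho
    unfold stepEven
    by_cases h : G.owner a = true
    · rw [if_pos h]
      obtain ⟨u, hu⟩ := G.total a; exact ⟨u, hu, u, hu, rfl⟩
    · rw [if_neg h]
      intro w' hw'; exact ⟨w', hw', rfl⟩

lemma isDirectSim_dsim : G.IsDirectSim G.dsim := by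
  intro v w ⟨R, hR, hvw⟩
  obtain ⟨h1, h2, h3⟩ := hR v w hvw
  refine ⟨h1, ?_, ?_⟩
  · intro ho v' hv'
    exact G.stepEven_mono (fun w' hw' => ⟨R, hR, hw'⟩) (h2 ho v' hv')
  · intro ho
    refine G.stepEven_mono ?_ (h3 ho)
    rintro w' ⟨v', hv', hw'⟩
    exact ⟨v', hv', R, hR, hw'⟩

/-- Unfold `dsim` for an even-owned left vertex, even-owned right vertex. -/
lemma dsim_even {v w : V} (h : G.dsim v w) (hv : G.owner v = true)
    (hw : G.owner w = true) :
    ∀ v', G.edge v v' → ∃ w', G.edge w w' ∧ G.dsim v' w' := by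
  intro v' hv'
  have := (G.isDirectSim_dsim v w h).2.1 hv v' hv'
  unfold stepEven at this
  rw [if_pos hw] at this
  exact this

lemma dsim_odd {v w : V} (h : G.dsim v w) (hv : G.owner v = false)
    (hw : G.owner w = false) :
    ∀ w', G.edge w w' → ∃ v', G.edge v v' ∧ G.dsim v' w' := by
  have := (G.isDirectSim_dsim v w h).2.2 hv
  unfold stepEven at this
  rw [if_neg (by simp [hw])] at this
  exact fun w' hw' => this w' hw'

lemma dsim_mixed_all {v w : V} (h : G.dsim v w) (hv : G.owner v = true)
    (hw : G.owner w = false) :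
    ∀ v', G.edge v v' → ∀ w', G.edge w w' → G.dsim v' w' := by
  intro v' hv' w' hw'
  have := (G.isDirectSim_dsim v w h).2.1 hv v' hv'
  unfold stepEven at this
  rw [if_neg (by simp [hw])] at this
  exact this w' hw'

lemma dsim_mixed_ex {v w : V} (h : G.dsim w v) (hw : G.owner w = false)
    (hv : G.owner v = true) :
    ∃ v₀, G.edge v v₀ ∧ ∃ w₀, G.edge w w₀ ∧ G.dsim w₀ v₀ := by
  have := (G.isDirectSim_dsim w v h).2.2 hw
  unfold stepEven at this
  rw [if_pos hv] at this
  obtain ⟨v₀, h1, w₀, h2, h3⟩ := this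
  exact ⟨v₀, h1, w₀, h2, h3⟩

lemma dsim_trans {a b c : V} (hab : G.dsim a b) (hbc : G.dsim b c) :
    G.dsim a c := by
  refine ⟨fun x z => ∃ y, G.dsim x y ∧ G.dsim y z, ?_, b, hab, hbc⟩
  rintro x z ⟨y, hxy, hyz⟩
  have Hxy := G.isDirectSim_dsim x y hxy
  have Hyz := G.isDirectSim_dsim y z hyz
  refine ⟨Hxy.1.trans Hyz.1, ?_, ?_⟩
  · intro hx x' hx'
    have s1 := Hxy.2.1 hx x' hx'
    unfold stepEven at s1
    by_cases hy : G.owner y = true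
    · rw [if_pos hy] at s1
      obtain ⟨y', hy', hx'y'⟩ := s1
      have s2 := Hyz.2.1 hy y' hy'
      exact G.stepEven_mono (fun z' hz' => ⟨y', hx'y', hz'⟩) s2
    · rw [if_neg hy] at s1
      have s2 := Hyz.2.2 (by simpa using hy)
      refine G.stepEven_mono ?_ s2
      rintro z' ⟨y', hy', hyz'⟩
      exact ⟨y', s1 y' hy', hyz'⟩
  · intro hx
    have s1 := Hxy.2.2 hx
    unfold stepEven at s1
    by_cases hy : G.owner y = true
    · rw [if_pos hy] at s1
      obtain ⟨y', hy', x', hx', hx'y'⟩ := s1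
      have s2 := Hyz.2.1 hy y' hy'
      exact G.stepEven_mono (fun z' hz' => ⟨x', hx', y', hx'y', hz'⟩) s2
    · rw [if_neg hy] at s1
      have s2 := Hyz.2.2 (by simpa using hy)
      refine G.stepEven_mono ?_ s2
      rintro z' ⟨y', hy', hyz'⟩
      obtain ⟨x', hx', hx'y'⟩ := s1 y' hy'
      exact ⟨x', hx', y', hx'y', hyz'⟩

lemma deq_refl (v : V) : G.deq v v := ⟨G.dsim_refl v, G.dsim_refl v⟩

lemma deq_symm {v w : V} (h : G.deq v w) : G.deq w v := ⟨h.2, h.1⟩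

lemma deq_trans {a b c : V} (h1 : G.deq a b) (h2 : G.deq b c) : G.deq a c :=
  ⟨G.dsim_trans h1.1 h2.1, G.dsim_trans h2.2 h1.2⟩

lemma cls_eq_s18 {a b : V} (h : G.deq a b) : {x | G.deq a x} = {x | G.deq b x} :=
  Set.ext fun x => ⟨fun hx => G.deq_trans (G.deq_symm h) hx,
    fun hx => G.deq_trans h hx⟩

end ParityGame

/-- In a finite type, any reflexive transitive relation admits, above any
element of a set, a maximal element of that set. -/
lemma exists_rel_maximal {V : Type u} [Fintype V] (r : V → V → Prop)
    (hrefl : ∀ v, r v v) (htrans : ∀ {a b c}, r a b → r b c → r a c)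
    (S : Set V) (x : V) (hx : x ∈ S) :
    ∃ m ∈ S, r x m ∧ ∀ u ∈ S, r m u → r u m := by
  classical
  let f : V → Finset V := fun y => Finset.univ.filter (fun z => z ∈ S ∧ r y z)
  suffices h : ∀ n, ∀ y ∈ S, (f y).card ≤ n →
      ∃ m ∈ S, r y m ∧ ∀ u ∈ S, r m u → r u m from h _ x hx le_rfl
  intro n
  induction n with
  | zero =>
    intro y hy hcard
    exfalso
    have : y ∈ f y := by simp [f, hy, hrefl y]
    have := Finset.card_pos.mpr ⟨y, this⟩
    omega
  | succ n ih =>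
    intro y hy hcard
    by_cases hmax : ∀ u ∈ S, r y u → r u y
    · exact ⟨y, hy, hrefl y, hmax⟩
    · push_neg at hmax
      obtain ⟨u, hu, hyu, huy⟩ := hmax
      have hsub : f u ⊂ f y := by
        constructor
        · intro z hz
          simp only [f, Finset.mem_filter] at *
          exact ⟨hz.1, hz.2.1, htrans hyu hz.2.2⟩
        · intro hle
          have : y ∈ f y := by simp [f, hy, hrefl y]
          have := hle this
          simp only [f, Finset.mem_filter] at this
          exact huy this.2.2
      have hlt := Finset.card_lt_card hsub
      obtain ⟨m, hm, hum, hmmax⟩ := ih u hu (by omega)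
      exact ⟨m, hm, htrans hyu hum, hmmax⟩

namespace ParityGame

variable {V : Type u} [Fintype V] (G : ParityGame V)

lemma minSucc_cls_subset {v w : V} (h : G.deq v w) (hv : G.owner v = false)
    (hw : G.owner w = false) : G.clsSet (G.minSucc v) ⊆ G.clsSet (G.minSucc w) := by
  rintro C ⟨v', ⟨hev', hminv'⟩, rfl⟩
  obtain ⟨w', hew', hw'v'⟩ := G.dsim_odd h.2 hw hv v' hev'
  obtain ⟨w₀, hew₀, hw₀w', hw₀min⟩ :=
    exists_rel_maximal (fun a b => G.dsim b a) G.dsim_refl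
      (fun hab hbc => G.dsim_trans hbc hab) {z | G.edge w z} w' hew'
  have hw₀v' : G.dsim w₀ v' := G.dsim_trans hw₀w' hw'v'
  obtain ⟨v'', hev'', hv''w₀⟩ := G.dsim_odd h.1 hv hw w₀ hew₀
  have hv'w₀ : G.dsim v' w₀ :=
    G.dsim_trans (hminv' v'' hev'' (G.dsim_trans hv''w₀ hw₀v')) hv''w₀
  exact ⟨w₀, ⟨hew₀, fun u hu => hw₀min u hu⟩, G.cls_eq_s18 ⟨hv'w₀, hw₀v'⟩⟩

lemma maxSucc_cls_subset {v w : V} (h : G.deq v w) (hv : G.owner v = true)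
    (hw : G.owner w = true) : G.clsSet (G.maxSucc v) ⊆ G.clsSet (G.maxSucc w) := by
  rintro C ⟨v', ⟨hev', hmaxv'⟩, rfl⟩
  obtain ⟨w', hew', hv'w'⟩ := G.dsim_even h.1 hv hw v' hev'
  obtain ⟨w₀, hew₀, hw'w₀, hw₀max⟩ :=
    exists_rel_maximal G.dsim G.dsim_refl G.dsim_trans {z | G.edge w z} w' hew'
  have hv'w₀ : G.dsim v' w₀ := G.dsim_trans hv'w' hw'w₀
  obtain ⟨v'', hev'', hw₀v''⟩ := G.dsim_even h.2 hw hv w₀ hew₀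
  have hw₀v' : G.dsim w₀ v' :=
    G.dsim_trans hw₀v'' (hmaxv' v'' hev'' (G.dsim_trans hv'w₀ hw₀v''))
  exact ⟨w₀, ⟨hew₀, fun u hu => hw₀max u hu⟩, G.cls_eq_s18 ⟨hv'w₀, hw₀v'⟩⟩

end ParityGame

theorem quotient_succ_classes' {V : Type u} [Fintype V] (G : ParityGame V) :
    ∀ c : V,
      ((∀ x, G.deq c x → G.owner x = false) →
        ∀ v w, G.deq c v → G.deq c w →
          G.clsSet (G.minSucc v) = G.clsSet (G.minSucc w)) ∧
      ((∀ x, G.deq c x → G.owner x = true) →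
        ∀ v w, G.deq c v → G.deq c w →
          G.clsSet (G.maxSucc v) = G.clsSet (G.maxSucc w)) ∧
      (∀ v w, G.deq c v → G.deq c w →
        G.owner v = true → G.owner w = false →
          G.clsSet (G.maxSucc v) = G.clsSet (G.minSucc w) ∧
          ∃ D, G.clsSet (G.maxSucc v) = {D}) := by
  intro c
  refine ⟨?_, ?_, ?_⟩
  · intro hodd v w hv hw
    have hvw : G.deq v w := G.deq_trans (G.deq_symm hv) hw
    exact Set.Subset.antisymm
      (G.minSucc_cls_subset hvw (hodd v hv) (hodd w hw))
      (G.minSucc_cls_subset (G.deq_symm hvw) (hodd w hw) (hodd v hv))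
  · intro heven v w hv hw
    have hvw : G.deq v w := G.deq_trans (G.deq_symm hv) hw
    exact Set.Subset.antisymm
      (G.maxSucc_cls_subset hvw (heven v hv) (heven w hw))
      (G.maxSucc_cls_subset (G.deq_symm hvw) (heven w hw) (heven v hv))
  · intro v w hv hw hov how
    have hvw : G.deq v w := G.deq_trans (G.deq_symm hv) hw
    have hall := G.dsim_mixed_all hvw.1 hov how
    obtain ⟨v₀, hev₀, w₀, hew₀, hw₀v₀⟩ := G.dsim_mixed_ex hvw.2 how hov
    -- all successors of w are above w₀
    have hw₀le : ∀ w', G.edge w w' → G.dsim w₀ w' :=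
      fun w' hw' => G.dsim_trans hw₀v₀ (hall v₀ hev₀ w' hw')
    -- all successors of v are below v₀
    have hlev₀ : ∀ v', G.edge v v' → G.dsim v' v₀ :=
      fun v' hv' => G.dsim_trans (hall v' hv' w₀ hew₀) hw₀v₀
    have hv₀max : v₀ ∈ G.maxSucc v :=
      ⟨hev₀, fun u hu _ => hlev₀ u hu⟩
    have hw₀min : w₀ ∈ G.minSucc w :=
      ⟨hew₀, fun u hu _ => hw₀le u hu⟩
    have hmax : G.clsSet (G.maxSucc v) = {{x | G.deq v₀ x}} := by
      apply Set.eq_singleton_iff_unique_mem.mpr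
      refine ⟨⟨v₀, hv₀max, rfl⟩, ?_⟩
      rintro C ⟨v', ⟨hev', hmaxv'⟩, rfl⟩
      have h1 : G.dsim v' v₀ := hlev₀ v' hev'
      have h2 : G.dsim v₀ v' := hmaxv' v₀ hev₀ h1
      exact G.cls_eq_s18 ⟨h1, h2⟩
    have hmin : G.clsSet (G.minSucc w) = {{x | G.deq v₀ x}} := by
      apply Set.eq_singleton_iff_unique_mem.mpr
      have hv₀w₀ : G.dsim v₀ w₀ := hall v₀ hev₀ w₀ hew₀
      refine ⟨⟨w₀, hw₀min, G.cls_eq_s18 ⟨hv₀w₀, hw₀v₀⟩⟩, ?_⟩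
      rintro C ⟨w', ⟨hew', hminw'⟩, rfl⟩
      have h1 : G.dsim w₀ w' := hw₀le w' hew'
      have h2 : G.dsim w' w₀ := hminw' w₀ hew₀ h1
      have : G.deq v₀ w' := G.deq_trans ⟨hv₀w₀, hw₀v₀⟩ ⟨h1, h2⟩
      exact G.cls_eq_s18 (G.deq_symm this)
    exact ⟨hmax.trans hmin.symm, _, hmax⟩

/-- Minimal/maximal successor classes in a direct simulation equivalence
class: for odd-only classes the minimal successor classes agree, for even-only
classes the maximal successor classes agree, and for mixed classes the maximal
successor classes of even members coincide with the minimal successor classes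
of odd members, this common set being a singleton. -/
theorem quotient_succ_classes {V : Type u} [Fintype V] (G : ParityGame V) :
    ∀ c : V,
      ((∀ x, G.deq c x → G.owner x = false) →
        ∀ v w, G.deq c v → G.deq c w →
          G.clsSet (G.minSucc v) = G.clsSet (G.minSucc w)) ∧
      ((∀ x, G.deq c x → G.owner x = true) →
        ∀ v w, G.deq c v → G.deq c w →
          G.clsSet (G.maxSucc v) = G.clsSet (G.maxSucc w)) ∧
      (∀ v w, G.deq c v → G.deq c w →
        G.owner v = true → G.owner w = false →
          G.clsSet (G.maxSucc v) = G.clsSet (G.minSucc w) ∧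
          ∃ D, G.clsSet (G.maxSucc v) = {D}) := by
  exact quotient_succ_classes' G
end
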